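/- For any E ≥ 0, the function x ↦ g(g⁻¹(x) + E) is increasing and convex on [0,∞). -/

import Mathlib

/-!
Write `y = g⁻¹ x`. Formally `d/dx g (y + E) = g' (y + E) / g' y` with `g' t = log (1 + 1/t)`, so the
claim amounts to the monotonicity of `t ↦ g' (t + E) / g' t`, i.e. to the convexity of `log g'`.
Indeed `(log g')' = -1 / (t (t + 1) g' t)`, and `t (t + 1) g' t` increases because
`g' t ≥ 1 / (t + 1)`. To avoid differentiating `g⁻¹` (which is not differentiable at `0`), chord
slopes of `g (· + E) ∘ g⁻¹` are compared through Cauchy's mean value theorem instead.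
-/

open Real Set Filter

noncomputable def g (E : ℝ) : ℝ := (E + 1) * Real.log (E + 1) - E * Real.log E

noncomputable def ginv : ℝ → ℝ := Function.invFunOn g (Set.Ici 0)

open Function

section InverseComposition

theorem StrictMonoOn.monotoneOn_comp_invFunOn {α β γ : Type*} [Nonempty α] [LinearOrder α]
    [Preorder β] [Preorder γ] {f : α → γ} {φ : α → β} {T : Set α}
    (hφ : StrictMonoOn φ T) (hf : MonotoneOn f T) :
    MonotoneOn (f ∘ invFunOn φ T) (φ '' T) := by
  rintro _ ⟨a, ha, rfl⟩ _ ⟨b, hb, rfl⟩ hab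
  simp only [comp_apply, hφ.injOn.leftInvOn_invFunOn ha, hφ.injOn.leftInvOn_invFunOn hb]
  exact hf ha hb ((hφ.le_iff_le ha hb).1 hab)

variable {f φ f' φ' : ℝ → ℝ}

theorem exists_div_sub_eq_div_deriv {a b : ℝ} (hab : a < b)
    (hfc : ContinuousOn f (Icc a b)) (hφc : ContinuousOn φ (Icc a b))
    (hff' : ∀ x ∈ Ioo a b, HasDerivAt f (f' x) x) (hφφ' : ∀ x ∈ Ioo a b, HasDerivAt φ (φ' x) x)
    (hφ : φ a ≠ φ b) (hφ' : ∀ x ∈ Ioo a b, φ' x ≠ 0) :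
    ∃ c ∈ Ioo a b, (f b - f a) / (φ b - φ a) = f' c / φ' c := by
  obtain ⟨c, hc, h⟩ := exists_ratio_hasDerivAt_eq_ratio_slope f f' hab hfc hff' φ φ' hφc hφφ'
  refine ⟨c, hc, ?_⟩
  rw [div_eq_div_iff (sub_ne_zero.2 hφ.symm) (hφ' c hc)]
  linarith

/-- Cauchy's mean value theorem turns the chord slopes of `f ∘ φ⁻¹` into values of `f' / φ'`. -/
theorem convexOn_comp_invFunOn {T : Set ℝ} (hT : Convex ℝ T)
    (hfc : ContinuousOn f T) (hφc : ContinuousOn φ T)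
    (hff' : ∀ x ∈ interior T, HasDerivAt f (f' x) x)
    (hφφ' : ∀ x ∈ interior T, HasDerivAt φ (φ' x) x)
    (hφ'_pos : ∀ x ∈ interior T, 0 < φ' x)
    (hmono : MonotoneOn (fun x => f' x / φ' x) (interior T)) :
    ConvexOn ℝ (φ '' T) (f ∘ invFunOn φ T) := by
  have hφ : StrictMonoOn φ T := strictMonoOn_of_hasDerivWithinAt_pos hT hφc
    (fun x hx => (hφφ' x hx).hasDerivWithinAt) hφ'_pos
  have hconv : Convex ℝ (φ '' T) :=
    Real.convex_iff_isPreconnected.2 ((Real.convex_iff_isPreconnected.1 hT).image φ hφc)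
  have slope : ∀ a ∈ T, ∀ b ∈ T, a < b →
      ∃ c ∈ Ioo a b ∩ interior T, (f b - f a) / (φ b - φ a) = f' c / φ' c := by
    intro a ha b hb hab
    have hIcc : Icc a b ⊆ T := hT.ordConnected.out ha hb
    have hIoo : Ioo a b ⊆ interior T := interior_Icc (a := a) (b := b) ▸ interior_mono hIcc
    obtain ⟨c, hc, h⟩ := exists_div_sub_eq_div_deriv hab (hfc.mono hIcc) (hφc.mono hIcc)
      (fun x hx => hff' x (hIoo hx)) (fun x hx => hφφ' x (hIoo hx))
      (hφ.injOn.ne ha hb hab.ne) (fun x hx => (hφ'_pos x (hIoo hx)).ne')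
    exact ⟨c, ⟨hc, hIoo hc⟩, h⟩
  refine convexOn_of_slope_mono_adjacent hconv ?_
  rintro _ y _ ⟨a, ha, rfl⟩ ⟨c, hc, rfl⟩ hay hyc
  obtain ⟨b, hb, rfl⟩ := hconv.ordConnected.out ⟨a, ha, rfl⟩ ⟨c, hc, rfl⟩ ⟨hay.le, hyc.le⟩
  simp only [comp_apply, hφ.injOn.leftInvOn_invFunOn ha, hφ.injOn.leftInvOn_invFunOn hb,
    hφ.injOn.leftInvOn_invFunOn hc]
  obtain ⟨c₁, hc₁, h₁⟩ := slope a ha b hb ((hφ.lt_iff_lt ha hb).1 hay)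
  obtain ⟨c₂, hc₂, h₂⟩ := slope b hb c hc ((hφ.lt_iff_lt hb hc).1 hyc)
  rw [h₁, h₂]
  exact hmono hc₁.2 hc₂.2 (hc₁.1.2.trans hc₂.1.1).le

end InverseComposition

theorem monotoneOn_shift_div_of_monotoneOn_logDeriv {L L' : ℝ → ℝ} {a E : ℝ} (hE : 0 ≤ E)
    (hL : ∀ t ∈ Ioi a, HasDerivAt L (L' t) t) (hL_pos : ∀ t ∈ Ioi a, 0 < L t)
    (hmono : MonotoneOn (fun t => L' t / L t) (Ioi a)) :
    MonotoneOn (fun t => L (t + E) / L t) (Ioi a) := by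
  have hshift : ∀ t ∈ Ioi a, t + E ∈ Ioi a := fun t ht => lt_add_of_lt_of_nonneg ht hE
  have hderiv : ∀ t ∈ Ioi a, HasDerivAt (fun t => L (t + E) / L t)
      ((L' (t + E) * L t - L (t + E) * L' t) / L t ^ 2) t := fun t ht =>
    ((hL _ (hshift t ht)).comp_add_const t E).div (hL t ht) (hL_pos t ht).ne'
  refine monotoneOn_of_hasDerivWithinAt_nonneg (convex_Ioi a)
    (fun t ht => (hderiv t ht).continuousAt.continuousWithinAt)
    (fun t ht => (hderiv t (interior_subset ht)).hasDerivWithinAt)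
    (fun t ht => div_nonneg ?_ (sq_nonneg _))
  rw [interior_Ioi] at ht
  have h := hmono ht (hshift t ht) (le_add_of_nonneg_right hE)
  rw [div_le_div_iff₀ (hL_pos t ht) (hL_pos _ (hshift t ht))] at h
  linarith

noncomputable def gDeriv (t : ℝ) : ℝ := log (t + 1) - log t

theorem continuous_g : Continuous g :=
  (continuous_mul_log.comp (continuous_add_const 1)).sub continuous_mul_log

theorem hasDerivAt_g {t : ℝ} (ht : 0 < t) : HasDerivAt g (gDeriv t) t := by
  have h : HasDerivAt g (log (t + 1) + 1 - (log t + 1)) t :=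
    ((hasDerivAt_mul_log (by linarith : t + 1 ≠ 0)).comp_add_const t 1).sub
      (hasDerivAt_mul_log ht.ne')
  convert h using 1
  unfold gDeriv
  ring

theorem gDeriv_pos {t : ℝ} (ht : 0 < t) : 0 < gDeriv t :=
  sub_pos.2 (log_lt_log ht (lt_add_one t))

theorem inv_add_one_le_gDeriv {t : ℝ} (ht : 0 < t) : (t + 1)⁻¹ ≤ gDeriv t := by
  have h := one_sub_inv_le_log_of_pos (show 0 < (t + 1) / t by positivity)
  rw [log_div (by positivity) ht.ne', inv_div, one_sub_div (by positivity),
    add_sub_cancel_left] at h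
  rw [inv_eq_one_div, gDeriv]
  exact h

theorem hasDerivAt_gDeriv {t : ℝ} (ht : 0 < t) :
    HasDerivAt gDeriv (-(t * (t + 1))⁻¹) t := by
  have h : HasDerivAt gDeriv ((t + 1)⁻¹ - t⁻¹) t :=
    ((hasDerivAt_log (by linarith : t + 1 ≠ 0)).comp_add_const t 1).sub (hasDerivAt_log ht.ne')
  convert h using 1
  field_simp
  ring

theorem strictMonoOn_g : StrictMonoOn g (Ici 0) :=
  strictMonoOn_of_hasDerivWithinAt_pos (convex_Ici 0) continuous_g.continuousOn
    (fun t ht => (hasDerivAt_g (by simpa using ht)).hasDerivWithinAt)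
    (fun t ht => gDeriv_pos (by simpa using ht))

theorem image_g_Ici : g '' Ici 0 = Ici 0 := by
  have g_zero : g 0 = 0 := by simp [g]
  refine Subset.antisymm ?_ fun x hx => ?_
  · rintro _ ⟨y, hy, rfl⟩
    exact g_zero ▸ strictMonoOn_g.monotoneOn self_mem_Ici hy hy
  -- `g (exp x) = log (exp x + 1) + exp x * gDeriv (exp x) ≥ log (exp x) = x`
  have hx_le : x ≤ g (exp x) := by
    have h₁ : log (exp x) ≤ log (exp x + 1) := log_le_log (exp_pos x) (by linarith)
    have h₂ : 0 ≤ exp x * gDeriv (exp x) := mul_nonneg (exp_pos x).le (gDeriv_pos (exp_pos x)).le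
    rw [log_exp] at h₁
    rw [gDeriv] at h₂
    simp only [g]
    linarith
  obtain ⟨y, hy, rfl⟩ := intermediate_value_Icc (exp_pos x).le continuous_g.continuousOn
    ⟨by rwa [g_zero], hx_le⟩
  exact ⟨y, hy.1, rfl⟩

-- `t * (t + 1) * gDeriv t` is the reciprocal of the logarithmic derivative `-gDeriv' / gDeriv`.
theorem monotoneOn_mul_gDeriv : MonotoneOn (fun t => t * (t + 1) * gDeriv t) (Ioi 0) := by
  have hderiv : ∀ t ∈ Ioi (0 : ℝ), HasDerivAt (fun t => t * (t + 1) * gDeriv t)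
      ((2 * t + 1) * gDeriv t - 1) t := by
    intro t (ht : 0 < t)
    have h : HasDerivAt (fun t => t * (t + 1) * gDeriv t)
        ((1 * (t + 1) + t * 1) * gDeriv t + t * (t + 1) * -(t * (t + 1))⁻¹) t :=
      ((hasDerivAt_id' t).mul ((hasDerivAt_id' t).add_const 1)).mul (hasDerivAt_gDeriv ht)
    convert h using 1
    rw [mul_neg, mul_inv_cancel₀ (by positivity)]
    ring
  refine monotoneOn_of_hasDerivWithinAt_nonneg (convex_Ioi 0)
    (fun t ht => (hderiv t ht).continuousAt.continuousWithinAt)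
    (fun t ht => (hderiv t (interior_subset ht)).hasDerivWithinAt) fun t ht => ?_
  replace ht : 0 < t := by simpa using ht
  have h := mul_le_mul_of_nonneg_left (inv_add_one_le_gDeriv ht) (by linarith : 0 ≤ 2 * t + 1)
  have h' : 1 ≤ (2 * t + 1) * (t + 1)⁻¹ := by
    rw [← div_eq_mul_inv, one_le_div (by linarith)]; linarith
  linarith

theorem monotoneOn_gDeriv_shift_div {E : ℝ} (hE : 0 ≤ E) :
    MonotoneOn (fun t => gDeriv (t + E) / gDeriv t) (Ioi 0) := by
  refine monotoneOn_shift_div_of_monotoneOn_logDeriv hE (fun t ht => hasDerivAt_gDeriv ht)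
    (fun t ht => gDeriv_pos ht) ?_
  intro s (hs : 0 < s) t (ht : 0 < t) hst
  have hmul_pos : 0 < s * (s + 1) * gDeriv s := by have := gDeriv_pos hs; positivity
  simp only [div_eq_mul_inv, neg_mul, ← mul_inv, neg_le_neg_iff]
  exact inv_anti₀ hmul_pos (monotoneOn_mul_gDeriv hs ht hst)

theorem additive_noise_thermal_entropy_monotone_convex (E : ℝ) (hE : 0 ≤ E) :
    MonotoneOn (fun x => g (ginv x + E)) (Set.Ici 0) ∧
      ConvexOn ℝ (Set.Ici 0) (fun x => g (ginv x + E)) := by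
  have hshift : ∀ t ∈ Ici (0 : ℝ), t + E ∈ Ici 0 := fun t ht => add_nonneg ht hE
  have hderiv : ∀ t ∈ interior (Ici (0 : ℝ)),
      HasDerivAt (fun y => g (y + E)) (gDeriv (t + E)) t := fun t ht =>
    (hasDerivAt_g (add_pos_of_pos_of_nonneg (by simpa using ht) hE)).comp_add_const t E
  rw [← image_g_Ici]
  refine ⟨strictMonoOn_g.monotoneOn_comp_invFunOn fun s hs t ht hst =>
      strictMonoOn_g.monotoneOn (hshift s hs) (hshift t ht) (by linarith), ?_⟩
  refine convexOn_comp_invFunOn (convex_Ici 0)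
    (continuous_g.comp (continuous_add_const E)).continuousOn continuous_g.continuousOn hderiv
    (fun t ht => hasDerivAt_g (by simpa using ht))
    (fun t ht => gDeriv_pos (by simpa using ht)) ?_
  rw [interior_Ici]
  exact monotoneOn_gDeriv_shift_div hE
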